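/- Let n ≥ 2, i ∈ {0,1,…,n} and j ∈ {2,…,n}, and let V_{i,j} = {σ ∈ Alt_{n+1} : σ(j) = i}. Then in the star digraph ST⃗_{n+1}: the set of out-neighbors of V_{i,j} lying outside V_{i,j} is exactly {τ ∈ Alt_{n+1} : τ(0) = i}, the set of in-neighbors of V_{i,j} lying outside V_{i,j} is exactly {τ ∈ Alt_{n+1} : τ(1) = i}, and hence the set of all vertices outside V_{i,j} adjacent to V_{i,j} (by an arc in either direction) equals S_i = {τ ∈ Alt_{n+1} : τ(0) = i or τ(1) = i}, independently of j. -/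

import Mathlib

/-- The 3-cycle `gᵢ` determined by `gᵢ 0 = i`, `gᵢ i = 1`, `gᵢ 1 = 0`. -/
def gcyc {m : ℕ} [NeZero m] (i : Fin m) : Equiv.Perm (Fin m) :=
  Equiv.swap 1 i * Equiv.swap 0 1

/-- Vertices of the star digraph `ST⃗_m`: the even permutations of `{0, …, m-1}`. -/
abbrev StarVertex (m : ℕ) := {σ : Equiv.Perm (Fin m) // σ ∈ alternatingGroup (Fin m)}

/-- The arc relation of the star digraph `ST⃗_m`: there is an arc from `σ` to `σ ∘ gᵢ`
for each `i ∈ {2, …, m-1}`. -/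
def starArc {m : ℕ} [NeZero m] (σ τ : StarVertex m) : Prop :=
  ∃ i : Fin m, 2 ≤ i.val ∧ (τ : Equiv.Perm (Fin m)) = (σ : Equiv.Perm (Fin m)) * gcyc i

/-- The set `S_i = {σ ∈ Alt_m : σ 0 = i or σ 1 = i}`. -/
def Sset (m : ℕ) [NeZero m] (i : Fin m) : Set (StarVertex m) :=
  {σ | (σ : Equiv.Perm (Fin m)) 0 = i ∨ (σ : Equiv.Perm (Fin m)) 1 = i}

/-- The set `V_{i,j} = {σ ∈ Alt_m : σ j = i}`. -/
def Vset (m : ℕ) (i j : Fin m) : Set (StarVertex m) :=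
  {σ | (σ : Equiv.Perm (Fin m)) j = i}

/-! Every generator `gₖ` with `k ≠ j` fixes `j`, so the only arcs joining `V_{i,j}` to its
complement are those along `gⱼ`. As `gⱼ` maps `0 ↦ j ↦ 1`, an arc `σ → σ gⱼ` leaving `V_{i,j}`
ends at a vertex with value `σ j = i` at `0`, and an arc `τ → τ gⱼ` entering it starts at a
vertex with `τ 1 = i`; conversely `τ gⱼ⁻¹` and `τ gⱼ` are the required neighbours in `V_{i,j}`. -/

theorem Fin.ne_zero_of_two_le_val {m : ℕ} [NeZero m] {j : Fin m} (hj : 2 ≤ j.val) : j ≠ 0 := by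
  rintro rfl
  simp at hj

theorem Fin.ne_one_of_two_le_val {m : ℕ} [NeZero m] {j : Fin m} (hj : 2 ≤ j.val) : j ≠ 1 := by
  rintro rfl
  have := Nat.mod_le 1 m
  simp only [Fin.val_one'] at hj
  omega

section gcyc

variable {m : ℕ} [NeZero m] {i : Fin m}

theorem gcyc_apply_zero (i : Fin m) : gcyc i 0 = i := by
  simp [gcyc]

theorem gcyc_apply_self (hi0 : i ≠ 0) (hi1 : i ≠ 1) : gcyc i i = 1 := by
  simp [gcyc, Equiv.swap_apply_of_ne_of_ne hi0 hi1]

theorem gcyc_apply_of_ne {x : Fin m} (hx0 : x ≠ 0) (hx1 : x ≠ 1) (hxi : x ≠ i) :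
    gcyc i x = x := by
  simp [gcyc, Equiv.swap_apply_of_ne_of_ne hx0 hx1, Equiv.swap_apply_of_ne_of_ne hx1 hxi]

theorem gcyc_mem_alternatingGroup (hi1 : i ≠ 1) : gcyc i ∈ alternatingGroup (Fin m) := by
  have h01 : (0 : Fin m) ≠ 1 := fun h =>
    letI := Fin.instCommRing m
    hi1 (@Subsingleton.elim _ (subsingleton_of_zero_eq_one h) _ _)
  simp [Equiv.Perm.mem_alternatingGroup, gcyc, Equiv.Perm.sign_swap h01,
    Equiv.Perm.sign_swap (Ne.symm hi1)]

end gcyc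

section Vset

variable {m : ℕ} [NeZero m] {i j : Fin m}

theorem starArc_eq_mul_gcyc_of_apply_ne {σ τ : StarVertex m} (hj0 : j ≠ 0) (hj1 : j ≠ 1)
    (harc : starArc σ τ) (hne : (τ : Equiv.Perm (Fin m)) j ≠ (σ : Equiv.Perm (Fin m)) j) :
    (τ : Equiv.Perm (Fin m)) = σ * gcyc j := by
  obtain ⟨k, -, hτ⟩ := harc
  obtain rfl : k = j := by
    by_contra hkj
    refine hne ?_
    rw [hτ, Equiv.Perm.mul_apply, gcyc_apply_of_ne hj0 hj1 (Ne.symm hkj)]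
  exact hτ

theorem outNeighbor_off_Vset_iff (hj : 2 ≤ j.val) (τ : StarVertex m) :
    (τ ∉ Vset m i j ∧ ∃ σ ∈ Vset m i j, starArc σ τ) ↔ (τ : Equiv.Perm (Fin m)) 0 = i := by
  have hj0 := Fin.ne_zero_of_two_le_val hj
  have hj1 := Fin.ne_one_of_two_le_val hj
  constructor
  · rintro ⟨hτ, σ, hσ, harc⟩
    have hστ := starArc_eq_mul_gcyc_of_apply_ne hj0 hj1 harc (hσ.symm ▸ hτ)
    rw [hστ, Equiv.Perm.mul_apply, gcyc_apply_zero, hσ]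
  · intro hτ0
    refine ⟨fun hτj => hj0 (τ.1.injective (hτj.trans hτ0.symm)),
      ⟨_, mul_mem τ.2 (inv_mem (gcyc_mem_alternatingGroup hj1))⟩, ?_, j, hj, by group⟩
    change (τ : Equiv.Perm (Fin m)) ((gcyc j)⁻¹ j) = i
    rw [Equiv.Perm.inv_eq_iff_eq.mpr (gcyc_apply_zero j).symm, hτ0]

theorem inNeighbor_off_Vset_iff (hj : 2 ≤ j.val) (τ : StarVertex m) :
    (τ ∉ Vset m i j ∧ ∃ σ ∈ Vset m i j, starArc τ σ) ↔ (τ : Equiv.Perm (Fin m)) 1 = i := by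
  have hj0 := Fin.ne_zero_of_two_le_val hj
  have hj1 := Fin.ne_one_of_two_le_val hj
  constructor
  · rintro ⟨hτ, σ, hσ, harc⟩
    have hστ := starArc_eq_mul_gcyc_of_apply_ne hj0 hj1 harc (hσ ▸ Ne.symm hτ)
    rw [← hσ, hστ, Equiv.Perm.mul_apply, gcyc_apply_self hj0 hj1]
  · intro hτ1
    refine ⟨fun hτj => hj1 (τ.1.injective (hτj.trans hτ1.symm)),
      ⟨_, mul_mem τ.2 (gcyc_mem_alternatingGroup hj1)⟩, ?_, j, hj, rfl⟩
    change (τ : Equiv.Perm (Fin m)) (gcyc j j) = i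
    rw [gcyc_apply_self hj0 hj1, hτ1]

end Vset

theorem stmt3_general (n : ℕ) (i j : Fin (n + 1)) (hj : 2 ≤ j.val) :
    {τ : StarVertex (n + 1) | τ ∉ Vset (n + 1) i j ∧ ∃ σ ∈ Vset (n + 1) i j, starArc σ τ}
        = {τ : StarVertex (n + 1) | (τ : Equiv.Perm (Fin (n + 1))) 0 = i} ∧
    {τ : StarVertex (n + 1) | τ ∉ Vset (n + 1) i j ∧ ∃ σ ∈ Vset (n + 1) i j, starArc τ σ}
        = {τ : StarVertex (n + 1) | (τ : Equiv.Perm (Fin (n + 1))) 1 = i} ∧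
    {τ : StarVertex (n + 1) | τ ∉ Vset (n + 1) i j ∧
        ∃ σ ∈ Vset (n + 1) i j, starArc σ τ ∨ starArc τ σ}
        = Sset (n + 1) i := by
  refine ⟨Set.ext (outNeighbor_off_Vset_iff hj), Set.ext (inNeighbor_off_Vset_iff hj),
    Set.ext fun τ => ?_⟩
  simp only [Sset, Set.mem_ofPred_eq, and_or_left, exists_or,
    outNeighbor_off_Vset_iff hj, inNeighbor_off_Vset_iff hj]

/-- For `n ≥ 2`, `i ∈ {0, …, n}` and `j ∈ {2, …, n}`: in `ST⃗_{n+1}`, the out-neighbors of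
`V_{i,j}` lying outside `V_{i,j}` are exactly the vertices `τ` with `τ 0 = i`, the
in-neighbors lying outside are exactly those with `τ 1 = i`, and the set of all outside
vertices adjacent to `V_{i,j}` in either direction is `S_i`, independently of `j`. -/
theorem stmt3 (n : ℕ) (hn : 2 ≤ n) (i j : Fin (n + 1)) (hj : 2 ≤ j.val) :
    {τ : StarVertex (n + 1) | τ ∉ Vset (n + 1) i j ∧ ∃ σ ∈ Vset (n + 1) i j, starArc σ τ}
        = {τ : StarVertex (n + 1) | (τ : Equiv.Perm (Fin (n + 1))) 0 = i} ∧
    {τ : StarVertex (n + 1) | τ ∉ Vset (n + 1) i j ∧ ∃ σ ∈ Vset (n + 1) i j, starArc τ σ}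
        = {τ : StarVertex (n + 1) | (τ : Equiv.Perm (Fin (n + 1))) 1 = i} ∧
    {τ : StarVertex (n + 1) | τ ∉ Vset (n + 1) i j ∧
        ∃ σ ∈ Vset (n + 1) i j, starArc σ τ ∨ starArc τ σ}
        = Sset (n + 1) i :=
  stmt3_general n i j hj
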